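/- Let G be a solvable p-group of exponent p^l and derived length d, and H ≤ Aut(G) with [g,ₙh] = 1 for all g ∈ G and h ∈ H. Then H has exponent bounded by a function f(p^l, n, d). -/

import Mathlib

/-!
Induct on the derived length. On the abelianization, `h = 1 + x` with `x ^ n = 0` in the
endomorphism ring and `q = p ^ l` annihilating it, so by Kummer's theorem the binomial expansion
of `(1 + x) ^ (q ^ n)` collapses to `1`. On `G'`, of smaller derived length, a power of `h` is
trivial by induction. An automorphism `u` trivial on both moves each `g` by `c = g⁻¹ u(g) ∈ G'`
with `u(c) = c`, so `u ^ j (g) = g c ^ j` and `u ^ q = 1`. Hence `h ^ q ^ ((n + 1) d) = 1`.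
-/

open Finset in
theorem one_add_pow_eq_one_of_pow_eq_zero {R : Type*} [Semiring R] {x : R} {q n m : ℕ}
    (hq : (q : R) = 0) (hx : x ^ n = 0) (hm : ∀ i, 0 < i → i < n → q ∣ m.choose i) :
    (1 + x) ^ m = 1 := by
  rw [add_comm, (Commute.one_right x).add_pow, sum_eq_single_of_mem 0 (mem_range.2 m.succ_pos)]
  · simp
  intro i _ hi
  rcases lt_or_ge i n with hin | hni
  · obtain ⟨t, ht⟩ := hm i (Nat.pos_of_ne_zero hi) hin
    simp [ht, hq]
  · simp [pow_eq_zero_of_le hni hx]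

theorem Nat.Prime.pow_dvd_choose_pow_pow {p l n i : ℕ} (hp : p.Prime) (hi : 0 < i)
    (hin : i < n) : p ^ l ∣ ((p ^ l) ^ n).choose i := by
  rcases Nat.eq_zero_or_pos l with rfl | hl
  · simp
  have hn : n ≤ p ^ (l * n) :=
    (Nat.lt_pow_self hp.one_lt).le.trans
      (Nat.pow_le_pow_right hp.pos (Nat.le_mul_of_pos_left n hl))
  rw [← pow_mul, hp.pow_dvd_iff_le_factorization (Nat.choose_pos (hin.le.trans hn)).ne',
    Nat.factorization_choose_prime_pow hp (hin.le.trans hn) hi.ne']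
  have hv : i.factorization p < n :=
    (Nat.lt_pow_self hp.one_lt).trans_le ((Nat.ordProj_le p hi.ne').trans hin.le)
  have : l + n ≤ l * n + 1 := by nlinarith
  omega

theorem map_subtype_derivedSeries_commutator (G : Type*) [Group G] (d : ℕ) :
    (derivedSeries (commutator G) d).map (commutator G).subtype = derivedSeries G (d + 1) := by
  induction d with
  | zero => rw [derivedSeries_zero, ← MonoidHom.range_eq_map, Subgroup.range_subtype]; rfl
  | succ d ih => rw [derivedSeries_succ, Subgroup.map_commutator, ih, ← derivedSeries_succ]

theorem derivedSeries_commutator_eq_bot {G : Type*} [Group G] {d : ℕ}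
    (hG : derivedSeries G (d + 1) = ⊥) : derivedSeries (commutator G) d = ⊥ := by
  rwa [← map_subtype_derivedSeries_commutator, Subgroup.map_eq_bot_iff_of_injective _
    (commutator G).subtype_injective] at hG

namespace MulAut

variable {G K A : Type*} [Group G] [Group K] [CommGroup A]

/-- `(fun a => a⁻¹ * h a)^[n] g` is the iterated commutator `[g,ₙh]`. -/
def IsUnipotent (n : ℕ) (h : MulAut G) : Prop :=
  ∀ g : G, (fun a => a⁻¹ * h a)^[n] g = 1

def toAddMonoidEnd : MulAut A →* AddMonoid.End (Additive A) where
  toFun φ := φ.toMonoidHom.toAdditive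
  map_one' := rfl
  map_mul' _ _ := rfl

theorem IsUnipotent.pow_eq_one_of_commGroup {q n m : ℕ} (hA : ∀ a : A, a ^ q = 1)
    (hm : ∀ i, 0 < i → i < n → q ∣ m.choose i) {φ : MulAut A} (hφ : IsUnipotent n φ) :
    φ ^ m = 1 := by
  set ψ := toAddMonoidEnd φ
  have hq : (q : AddMonoid.End (Additive A)) = 0 := by
    ext a
    exact hA a.toMul
  have hψ : ⇑(ψ - 1) = fun a : A => a⁻¹ * φ a := by
    funext a
    exact div_eq_inv_mul (φ a.toMul) a.toMul
  have hnil : (ψ - 1) ^ n = 0 := by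
    ext a
    rw [AddMonoid.End.coe_pow, hψ]
    exact hφ a
  have hψm : toAddMonoidEnd (φ ^ m) = 1 := by
    rw [map_pow, show toAddMonoidEnd φ = ψ from rfl, ← add_sub_cancel 1 ψ]
    exact one_add_pow_eq_one_of_pow_eq_zero hq hnil hm
  ext a
  exact DFunLike.congr_fun hψm (Additive.ofMul a)

def abelianization : MulAut G →* MulAut (Abelianization G) where
  toFun e := e.abelianizationCongr
  map_one' := abelianizationCongr_refl
  map_mul' e f := (abelianizationCongr_trans f e).symm

theorem abelianization_apply_of (e : MulAut G) (g : G) :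
    abelianization e (Abelianization.of g) = Abelianization.of (e g) :=
  rfl

theorem map_iterate_inv_mul_apply {n : ℕ} (f : G →* K) {h : MulAut G} {h' : MulAut K}
    (hf : ∀ g, f (h g) = h' (f g)) (g : G) :
    f ((fun a => a⁻¹ * h a)^[n] g) = (fun b => b⁻¹ * h' b)^[n] (f g) :=
  Function.Semiconj.iterate_right (fun a => by simp [hf]) n g

theorem IsUnipotent.abelianization {n : ℕ} {h : MulAut G} (hh : IsUnipotent n h) :
    IsUnipotent n (abelianization h) := by
  rintro ⟨g⟩
  rw [← map_one Abelianization.of, ← hh g]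
  exact (map_iterate_inv_mul_apply Abelianization.of (abelianization_apply_of h) g).symm

theorem IsUnipotent.characteristic {n : ℕ} {h : MulAut G} (hh : IsUnipotent n h)
    (H : Subgroup G) [H.Characteristic] : IsUnipotent n (MulAut.characteristic H h) := by
  intro x
  apply H.subtype_injective
  rw [map_iterate_inv_mul_apply H.subtype (fun _ => rfl), map_one]
  exact hh x

theorem pow_apply_eq_mul_pow {u : MulAut G} {g : G} (hg : u (g⁻¹ * u g) = g⁻¹ * u g)
    (j : ℕ) :
    (u ^ j) g = g * (g⁻¹ * u g) ^ j := by
  induction j with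
  | zero => simp
  | succ j ih =>
    rw [pow_succ', mul_apply, ih, map_mul, map_pow, hg, pow_succ', ← mul_assoc,
      mul_inv_cancel_left]

theorem pow_eq_one_of_abelianization_eq_one {q : ℕ} (hG : ∀ g : G, g ^ q = 1) {u : MulAut G}
    (hab : abelianization u = 1) (hcomm : MulAut.characteristic (commutator G) u = 1) :
    u ^ q = 1 := by
  ext g
  have hmem : g⁻¹ * u g ∈ commutator G := by
    rw [← Abelianization.ker_of, MonoidHom.mem_ker, map_mul, map_inv,
      ← abelianization_apply_of, hab, one_apply, inv_mul_cancel]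
  have hfix : u (g⁻¹ * u g) = g⁻¹ * u g :=
    congrArg Subtype.val (DFunLike.congr_fun hcomm ⟨_, hmem⟩ :)
  rw [pow_apply_eq_mul_pow hfix, hG, mul_one, one_apply]

theorem IsUnipotent.pow_eq_one_of_derivedSeries_eq_bot {q n : ℕ}
    (hq : ∀ i, 0 < i → i < n → q ∣ (q ^ n).choose i) (d : ℕ) {G : Type*} [Group G]
    (hG : ∀ g : G, g ^ q = 1) (hd : derivedSeries G d = ⊥) {h : MulAut G}
    (hh : IsUnipotent n h) : h ^ q ^ ((n + 1) * d) = 1 := by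
  induction d generalizing G with
  | zero =>
    have : Subsingleton G := Subgroup.subsingleton_iff.mp (subsingleton_of_bot_eq_top hd.symm)
    exact MulEquiv.ext fun _ => Subsingleton.elim _ _
  | succ d ih =>
    have hab : MulAut.abelianization h ^ q ^ n = 1 := by
      refine hh.abelianization.pow_eq_one_of_commGroup ?_ hq
      rintro ⟨g⟩
      exact (map_pow Abelianization.of g q).symm.trans (by rw [hG, map_one])
    have hcomm : MulAut.characteristic (commutator G) h ^ q ^ ((n + 1) * d) = 1 :=
      ih (fun x => Subtype.ext (hG x)) (derivedSeries_commutator_eq_bot hd)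
        (hh.characteristic _)
    have hexp : q ^ ((n + 1) * (d + 1)) = q ^ n * q ^ ((n + 1) * d) * q := by ring
    rw [hexp, pow_mul]
    refine pow_eq_one_of_abelianization_eq_one hG ?_ ?_
    · rw [map_pow, pow_mul, hab, one_pow]
    · rw [map_pow, pow_mul', hcomm, one_pow]

end MulAut

/-- The exponent of a group of `n`-unipotent automorphisms of a solvable `p`-group of
exponent `p^l` and derived length `d` is bounded by a function `f(p^l, n, d)`. -/
theorem stmt_6 :
    ∃ f : ℕ → ℕ → ℕ → ℕ, (∀ q n d, 0 < f q n d) ∧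
      ∀ (p l n d : ℕ), p.Prime →
        ∀ (G : Type) (_ : Group G),
          (∀ g : G, g ^ p ^ l = 1) →
          derivedSeries G d = ⊥ →
          ∀ H : Subgroup (MulAut G),
            (∀ h ∈ H, ∀ g : G, (fun a => a⁻¹ * h a)^[n] g = 1) →
            ∀ h ∈ H, h ^ f (p ^ l) n d = 1 := by
  refine ⟨fun q n d => max q 1 ^ ((n + 1) * d), fun q n d => by positivity, ?_⟩
  intro p l n d hp G _ hG hd H hH h hh
  dsimp only
  rw [max_eq_left (Nat.one_le_pow l p hp.pos)]
  exact MulAut.IsUnipotent.pow_eq_one_of_derivedSeries_eq_bot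
    (fun i hi hin => hp.pow_dvd_choose_pow_pow hi hin) d hG hd (hH h hh)
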